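/- Let Γ ↷ (X,ν) be a measurable measure-class-preserving action of a countable discrete group on a σ-finite measure space, Y ⊆ X a domain, and S ⊆ Γ a finite symmetric subset containing the identity. Suppose there is a constant Θ ≥ 1 such that 1/Θ ≤ r(s,x) ≤ Θ for every x ∈ Y and every s ∈ S with s·x ∈ Y. Then Y is a domain of S-expansion if and only if Y is a domain of Markov S-expansion, i.e. the Cheeger constant of the normalised local Markov kernel Π_{Y,S} with respect to ν̃_{Y,S} is strictly positive. -/

import Mathlib

/-! Both conditions are isoperimetric inequalities for subsets of `Y`: one for `ν` with boundary
`ν((S·A) ∩ (Y \ A))`, the other for `ν̃_{Y,S}` with boundary `|∂_Π A|`. The bounds on `r` make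
`σ_{Y,S}` bounded above and below on `Y`, so `ν̃_{Y,S} ≍ ν` there, and make both boundaries
comparable to the edge mass `∑_{s ∈ S} ν(A ∩ s⁻¹(Y \ A))`, with constants depending only on `Θ`
and `|S|`. Comparable isoperimetric inequalities hold together; the two halving conditions differ,
which is handled by passing to `Y \ A`, whose boundaries are controlled by those of `A` because
`S` is symmetric. -/

open MeasureTheory ENNReal Filter
open scoped Classical

noncomputable section

/-- The Radon–Nikodym derivative `r(γ,x) = d(γ⁻¹_*ν)/dν (x)` of a
measure-class-preserving action. -/
def rnd {Γ X : Type*} [Group Γ] [MulAction Γ X] [MeasurableSpace X]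
    (ν : Measure X) (γ : Γ) (x : X) : ℝ≥0∞ :=
  Measure.rnDeriv (ν.map (fun y => γ⁻¹ • y)) ν x

/-- `σ_{Y,S}(x) = Σ_{s ∈ S, s·x ∈ Y} r(s,x)^{1/2}`. -/
def sigmaLoc {Γ X : Type*} [Group Γ] [MulAction Γ X] [MeasurableSpace X]
    (ν : Measure X) (S : Finset Γ) (Y : Set X) (x : X) : ℝ≥0∞ :=
  ∑ s ∈ S, if s • x ∈ Y then (rnd ν s x) ^ (1/2 : ℝ) else 0

/-- The measure `ν̃_{Y,S}`, given by `dν̃_{Y,S} = σ_{Y,S} · d(ν|_Y)`. -/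
def nuT {Γ X : Type*} [Group Γ] [MulAction Γ X] [MeasurableSpace X]
    (ν : Measure X) (S : Finset Γ) (Y : Set X) : Measure X :=
  (ν.restrict Y).withDensity (sigmaLoc ν S Y)

/-- The normalised local Markov kernel
`Π_{Y,S}(x,·) = (1/σ_{Y,S}(x)) Σ_{s ∈ S, s·x ∈ Y} r(s,x)^{1/2} δ_{s·x}`. -/
def locKer {Γ X : Type*} [Group Γ] [MulAction Γ X] [MeasurableSpace X]
    (ν : Measure X) (S : Finset Γ) (Y : Set X) (x : X) : Measure X :=
  (sigmaLoc ν S Y x)⁻¹ •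
    ∑ s ∈ S, (if s • x ∈ Y then (rnd ν s x) ^ (1/2 : ℝ) else 0) • Measure.dirac (s • x)

/-- The `ν̃_{Y,S}`-size of the boundary of `A ⊆ Y` with respect to `Π_{Y,S}`:
`|∂ A| = ∫_A Π_{Y,S}(x, Y∖A) dν̃_{Y,S}(x)`. -/
def mkBdry {Γ X : Type*} [Group Γ] [MulAction Γ X] [MeasurableSpace X]
    (ν : Measure X) (S : Finset Γ) (Y A : Set X) : ℝ≥0∞ :=
  ∫⁻ x in A, locKer ν S Y x (Y \ A) ∂(nuT ν S Y)

/-- `Y` is a domain of Markov `S`-expansion: the Cheeger constant of the normalised local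
Markov kernel `Π_{Y,S}` with respect to its reversing measure `ν̃_{Y,S}` is strictly
positive. -/
def MarkovSExpansion {Γ X : Type*} [Group Γ] [MulAction Γ X] [MeasurableSpace X]
    (ν : Measure X) (S : Finset Γ) (Y : Set X) : Prop :=
  0 < sInf { q : ℝ≥0∞ | ∃ A : Set X, MeasurableSet A ∧ A ⊆ Y ∧ 0 < nuT ν S Y A ∧
    nuT ν S Y A ≤ nuT ν S Y Y / 2 ∧ q = mkBdry ν S Y A / nuT ν S Y A }

/-- `Y` is a domain of `S`-expansion: there is `c > 0` such that every measurable
`A ⊆ Y` with `0 < ν(A) ≤ ν(Y)/2` satisfies `ν((S·A) ∩ Y) > (1+c)·ν(A)`. -/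
def DomainSExpansion {Γ X : Type*} [Group Γ] [MulAction Γ X] [MeasurableSpace X]
    (ν : Measure X) (S : Finset Γ) (Y : Set X) : Prop :=
  ∃ c : ℝ, 0 < c ∧ ∀ A : Set X, MeasurableSet A → A ⊆ Y → 0 < ν A → ν A ≤ ν Y / 2 →
    (1 + ENNReal.ofReal c) * ν A < ν ((⋃ s ∈ S, (fun x => s • x) '' A) ∩ Y)

section Isoperimetric

variable {X : Type*} [MeasurableSpace X]

def HasIsoperimetricConstant (μ : Measure X) (b : Set X → ℝ≥0∞) (Y : Set X) : Prop :=
  ∃ c : ℝ≥0∞, c ≠ 0 ∧ ∀ A : Set X, MeasurableSet A → A ⊆ Y → 0 < μ A → μ A ≤ μ Y / 2 →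
    c * μ A ≤ b A

theorem measure_le_half_iff_le_measure_sdiff {μ : Measure X} {A Y : Set X}
    (hA : MeasurableSet A) (hAY : A ⊆ Y) (hY : μ Y ≠ ⊤) :
    μ A ≤ μ Y / 2 ↔ μ A ≤ μ (Y \ A) := by
  have hsplit : μ Y = μ A + μ (Y \ A) := by
    rw [measure_add_sdiff hA.nullMeasurableSet, Set.union_eq_self_of_subset_left hAY]
  rw [hsplit, ENNReal.le_div_iff_mul_le (Or.inl two_ne_zero) (Or.inl ofNat_ne_top), mul_two,
    ENNReal.add_le_add_iff_left (ne_top_of_le_ne_top hY (measure_mono hAY))]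

theorem hasIsoperimetricConstant_iff_sInf_pos {μ : Measure X} {b : Set X → ℝ≥0∞} {Y : Set X}
    (hY : μ Y ≠ ⊤) :
    HasIsoperimetricConstant μ b Y ↔ 0 < sInf { q : ℝ≥0∞ | ∃ A : Set X, MeasurableSet A ∧
      A ⊆ Y ∧ 0 < μ A ∧ μ A ≤ μ Y / 2 ∧ q = b A / μ A } := by
  have le_div_iff {c : ℝ≥0∞} {A : Set X} (hAY : A ⊆ Y) (hA : 0 < μ A) :
      c ≤ b A / μ A ↔ c * μ A ≤ b A :=
    ENNReal.le_div_iff_mul_le (Or.inl hA.ne') (Or.inl (ne_top_of_le_ne_top hY (measure_mono hAY)))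
  constructor
  · rintro ⟨c, hc, hiso⟩
    refine (pos_iff_ne_zero.2 hc).trans_le (le_sInf ?_)
    rintro _ ⟨A, hA, hAY, hpos, hhalf, rfl⟩
    exact (le_div_iff hAY hpos).2 (hiso A hA hAY hpos hhalf)
  · intro h
    exact ⟨_, h.ne', fun A hA hAY hpos hhalf =>
      (le_div_iff hAY hpos).1 (sInf_le ⟨A, hA, hAY, hpos, hhalf, rfl⟩)⟩

/-- A set that is small for `μ₂` may be large for `μ₁`; its complement is then tested instead,
which is why `b₁ (Y \ A) ≲ b₂ A` is needed besides `b₁ A ≲ b₂ A`. -/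
theorem HasIsoperimetricConstant.of_comparable {μ₁ μ₂ : Measure X} {b₁ b₂ : Set X → ℝ≥0∞}
    {Y : Set X} (h : HasIsoperimetricConstant μ₁ b₁ Y) (hY : MeasurableSet Y)
    (hY₁ : μ₁ Y ≠ ⊤) (hY₂ : μ₂ Y ≠ ⊤) {M K K' : ℝ≥0∞} (hM : M ≠ ⊤) (hK : K ≠ ⊤) (hK' : K' ≠ ⊤)
    (hμ : ∀ A, MeasurableSet A → A ⊆ Y → μ₂ A ≤ M * μ₁ A)
    (hb : ∀ A, MeasurableSet A → A ⊆ Y → b₁ A ≤ K * b₂ A)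
    (hb' : ∀ A, MeasurableSet A → A ⊆ Y → b₁ (Y \ A) ≤ K' * b₂ A) :
    HasIsoperimetricConstant μ₂ b₂ Y := by
  obtain ⟨c, hc, hiso⟩ := h
  refine ⟨c / (M * (K + K')), (ENNReal.div_pos hc (mul_ne_top hM (add_ne_top.2 ⟨hK, hK'⟩))).ne',
    fun A hA hAY hpos hhalf => ?_⟩
  rw [div_eq_mul_inv, mul_right_comm, ← div_eq_mul_inv]
  refine ENNReal.div_le_of_le_mul ?_
  have pos_of_pos {B : Set X} (hB : MeasurableSet B) (hBY : B ⊆ Y) (h₂ : 0 < μ₂ B) : 0 < μ₁ B :=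
    pos_iff_ne_zero.2 fun h₁ => h₂.ne' (le_antisymm (by simpa [h₁] using hμ B hB hBY) zero_le)
  have hB : MeasurableSet (Y \ A) := hY.diff hA
  by_cases hsmall : μ₁ A ≤ μ₁ Y / 2
  · calc c * μ₂ A ≤ M * (c * μ₁ A) := by
          rw [mul_left_comm]; gcongr; exact hμ A hA hAY
      _ ≤ M * (K * b₂ A) := by
          gcongr M * ?_; exact (hiso A hA hAY (pos_of_pos hA hAY hpos) hsmall).trans (hb A hA hAY)
      _ ≤ M * ((K + K') * b₂ A) := by gcongr M * (?_ * _); exact le_self_add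
      _ = b₂ A * (M * (K + K')) := by ring
  · have hle₂ : μ₂ A ≤ μ₂ (Y \ A) := (measure_le_half_iff_le_measure_sdiff hA hAY hY₂).1 hhalf
    have hsmall' : μ₁ (Y \ A) ≤ μ₁ Y / 2 := by
      rw [measure_le_half_iff_le_measure_sdiff hB Set.sdiff_subset hY₁,
        Set.sdiff_sdiff_cancel_left hAY]
      exact (not_le.1 (mt (measure_le_half_iff_le_measure_sdiff hA hAY hY₁).2 hsmall)).le
    have hpos' : 0 < μ₁ (Y \ A) := pos_of_pos hB Set.sdiff_subset (hpos.trans_le hle₂)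
    calc c * μ₂ A ≤ M * (c * μ₁ (Y \ A)) := by
          rw [mul_left_comm]; gcongr; exact hle₂.trans (hμ _ hB Set.sdiff_subset)
      _ ≤ M * (K' * b₂ A) := by
          gcongr M * ?_; exact (hiso _ hB Set.sdiff_subset hpos' hsmall').trans (hb' A hA hAY)
      _ ≤ M * ((K + K') * b₂ A) := by gcongr M * (?_ * _); exact le_add_self
      _ = b₂ A * (M * (K + K')) := by ring

end Isoperimetric

section Action

variable {Γ X : Type*} [Group Γ] [MulAction Γ X] [MeasurableSpace X]
  {ν : Measure X} {S : Finset Γ} {Y A : Set X} {θ : ℝ≥0∞}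

def outerBoundary (S : Finset Γ) (Y A : Set X) : Set X :=
  (⋃ s ∈ S, (fun x => s • x) '' A) ∩ (Y \ A)

def edgeMeasure (ν : Measure X) (S : Finset Γ) (Y A : Set X) : ℝ≥0∞ :=
  ∑ s ∈ S, ν (A ∩ (fun x => s • x) ⁻¹' (Y \ A))

def RNBoundedOn (ν : Measure X) (S : Finset Γ) (Y : Set X) (θ : ℝ≥0∞) : Prop :=
  ∀ x ∈ Y, ∀ s ∈ S, s • x ∈ Y → rnd ν s x ∈ Set.Icc θ⁻¹ θ

theorem measure_smulSet_inter_eq_add_outerBoundary (hone : (1 : Γ) ∈ S)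
    (hA : MeasurableSet A) (hAY : A ⊆ Y) :
    ν ((⋃ s ∈ S, (fun x => s • x) '' A) ∩ Y) = ν A + ν (outerBoundary S Y A) := by
  have hsplit : (⋃ s ∈ S, (fun x => s • x) '' A) ∩ Y = A ∪ outerBoundary S Y A := by
    ext x
    by_cases hx : x ∈ A
    · exact ⟨fun _ => Or.inl hx,
        fun _ => ⟨Set.mem_iUnion₂.2 ⟨1, hone, x, hx, one_smul Γ x⟩, hAY hx⟩⟩
    · simp [hx, outerBoundary]
  have hdisj : Disjoint A (outerBoundary S Y A) :=
    Set.disjoint_sdiff_right.mono_right Set.inter_subset_right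
  rw [hsplit, measure_union' hdisj hA]

theorem domainSExpansion_iff_hasIsoperimetricConstant (hone : (1 : Γ) ∈ S) (hY : ν Y ≠ ⊤) :
    DomainSExpansion ν S Y ↔
      HasIsoperimetricConstant ν (fun A => ν (outerBoundary S Y A)) Y := by
  have lt_iff {c : ℝ≥0∞} {A : Set X} (hA : MeasurableSet A) (hAY : A ⊆ Y) :
      (1 + c) * ν A < ν ((⋃ s ∈ S, (fun x => s • x) '' A) ∩ Y) ↔
        c * ν A < ν (outerBoundary S Y A) := by
    rw [measure_smulSet_inter_eq_add_outerBoundary hone hA hAY, add_mul, one_mul,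
      ENNReal.add_lt_add_iff_left (ne_top_of_le_ne_top hY (measure_mono hAY))]
  constructor
  · rintro ⟨c, hc, hexp⟩
    exact ⟨ENNReal.ofReal c, (ENNReal.ofReal_pos.2 hc).ne', fun A hA hAY hpos hhalf =>
      ((lt_iff hA hAY).1 (hexp A hA hAY hpos hhalf)).le⟩
  · rintro ⟨c, hc, hiso⟩
    obtain ⟨r, -, hr, hrc⟩ := ENNReal.lt_iff_exists_real_btwn.1 (pos_iff_ne_zero.2 hc)
    refine ⟨r, ENNReal.ofReal_pos.1 hr, fun A hA hAY hpos hhalf => (lt_iff hA hAY).2 ?_⟩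
    exact (ENNReal.mul_lt_mul_left hpos.ne' (ne_top_of_le_ne_top hY (measure_mono hAY)) hrc
      ).trans_le (hiso A hA hAY hpos hhalf)

theorem measure_image_smul_eq_setLIntegral_rnd [SigmaFinite ν]
    (hmeas : ∀ γ : Γ, Measurable (fun x : X => γ • x))
    (hmcp : ∀ γ : Γ, Measure.QuasiMeasurePreserving (fun x : X => γ • x) ν ν)
    (s : Γ) {C : Set X} (hC : MeasurableSet C) :
    ν ((fun x => s • x) '' C) = ∫⁻ x in C, rnd ν s x ∂ν := by
  have : MeasurableConstSMul Γ X := ⟨hmeas⟩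
  have : SigmaFinite (ν.map (fun x => s⁻¹ • x)) := (MeasurableEquiv.smul s⁻¹).sigmaFinite_map
  unfold rnd
  rw [Measure.setLIntegral_rnDeriv (hmcp s⁻¹).absolutelyContinuous,
    Measure.map_apply (hmeas s⁻¹) hC, Set.image_smul, Set.preimage_smul_inv]

theorem RNBoundedOn.measure_image_smul_le (h : RNBoundedOn ν S Y θ) [SigmaFinite ν]
    (hmeas : ∀ γ : Γ, Measurable (fun x : X => γ • x))
    (hmcp : ∀ γ : Γ, Measure.QuasiMeasurePreserving (fun x : X => γ • x) ν ν)
    {s : Γ} (hs : s ∈ S) {C : Set X} (hC : MeasurableSet C) (hCY : C ⊆ Y)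
    (hsC : ∀ x ∈ C, s • x ∈ Y) :
    ν ((fun x => s • x) '' C) ≤ θ * ν C := by
  rw [measure_image_smul_eq_setLIntegral_rnd hmeas hmcp s hC, ← setLIntegral_const]
  exact setLIntegral_mono' hC fun x hx => (h x (hCY hx) s hs (hsC x hx)).2

theorem ENNReal.rpow_half_mem_Icc_inv {a θ : ℝ≥0∞} (hθ : 1 ≤ θ) (ha : a ∈ Set.Icc θ⁻¹ θ) :
    a ^ (1 / 2 : ℝ) ∈ Set.Icc θ⁻¹ θ := by
  constructor
  · calc θ⁻¹ = θ⁻¹ ^ (1 : ℝ) := (ENNReal.rpow_one _).symm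
      _ ≤ θ⁻¹ ^ (1 / 2 : ℝ) :=
          ENNReal.rpow_le_rpow_of_exponent_ge (ENNReal.inv_le_one.2 hθ) (by norm_num)
      _ ≤ a ^ (1 / 2 : ℝ) := ENNReal.rpow_le_rpow ha.1 (by norm_num)
  · calc a ^ (1 / 2 : ℝ) ≤ θ ^ (1 / 2 : ℝ) := ENNReal.rpow_le_rpow ha.2 (by norm_num)
      _ ≤ θ ^ (1 : ℝ) := ENNReal.rpow_le_rpow_of_exponent_le hθ (by norm_num)
      _ = θ := ENNReal.rpow_one θ

theorem RNBoundedOn.inv_le_sigmaLoc (h : RNBoundedOn ν S Y θ) (hθ : 1 ≤ θ)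
    (hone : (1 : Γ) ∈ S) {x : X} (hx : x ∈ Y) : θ⁻¹ ≤ sigmaLoc ν S Y x := by
  have h1 : (1 : Γ) • x ∈ Y := by rwa [one_smul]
  calc θ⁻¹ ≤ rnd ν 1 x ^ (1 / 2 : ℝ) := (ENNReal.rpow_half_mem_Icc_inv hθ (h x hx 1 hone h1)).1
    _ = if (1 : Γ) • x ∈ Y then rnd ν 1 x ^ (1 / 2 : ℝ) else 0 := (if_pos h1).symm
    _ ≤ sigmaLoc ν S Y x :=
        Finset.single_le_sum (f := fun s => if s • x ∈ Y then rnd ν s x ^ (1 / 2 : ℝ) else 0)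
          (fun _ _ => zero_le) hone

theorem RNBoundedOn.sigmaLoc_le (h : RNBoundedOn ν S Y θ) (hθ : 1 ≤ θ) {x : X} (hx : x ∈ Y) :
    sigmaLoc ν S Y x ≤ S.card * θ := by
  rw [sigmaLoc, ← nsmul_eq_mul]
  refine Finset.sum_le_card_nsmul _ _ _ fun s hs => ?_
  split_ifs with hsx
  · exact (ENNReal.rpow_half_mem_Icc_inv hθ (h x hx s hs hsx)).2
  · exact zero_le

theorem nuT_apply_of_subset (hA : MeasurableSet A) (hAY : A ⊆ Y) :
    nuT ν S Y A = ∫⁻ x in A, sigmaLoc ν S Y x ∂ν := by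
  rw [nuT, withDensity_apply _ hA, Measure.restrict_restrict hA,
    Set.inter_eq_self_of_subset_left hAY]

theorem RNBoundedOn.nuT_le_mul_measure (h : RNBoundedOn ν S Y θ) (hθ : 1 ≤ θ)
    (hA : MeasurableSet A) (hAY : A ⊆ Y) : nuT ν S Y A ≤ S.card * θ * ν A := by
  rw [nuT_apply_of_subset hA hAY, ← setLIntegral_const]
  exact setLIntegral_mono' hA fun x hx => h.sigmaLoc_le hθ (hAY hx)

theorem RNBoundedOn.measure_le_mul_nuT (h : RNBoundedOn ν S Y θ) (hθ : 1 ≤ θ) (hθ' : θ ≠ ⊤)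
    (hone : (1 : Γ) ∈ S) (hA : MeasurableSet A) (hAY : A ⊆ Y) : ν A ≤ θ * nuT ν S Y A := by
  rw [← ENNReal.inv_mul_le_iff (zero_lt_one.trans_le hθ).ne' hθ', nuT_apply_of_subset hA hAY,
    ← setLIntegral_const]
  exact setLIntegral_mono' hA fun x hx => h.inv_le_sigmaLoc hθ hone (hAY hx)

theorem measurable_sigmaLoc (hmeas : ∀ γ : Γ, Measurable (fun x : X => γ • x))
    (hY : MeasurableSet Y) : Measurable (sigmaLoc ν S Y) :=
  Finset.measurable_sum _ fun s _ =>
    Measurable.ite (hmeas s hY) ((Measure.measurable_rnDeriv _ _).pow_const _) measurable_const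

theorem locKer_apply_of_subset {B : Set X} (hB : MeasurableSet B) (hBY : B ⊆ Y) (x : X) :
    locKer ν S Y x B = (sigmaLoc ν S Y x)⁻¹ *
      ∑ s ∈ S, ((fun x => s • x) ⁻¹' B).indicator (fun x => rnd ν s x ^ (1 / 2 : ℝ)) x := by
  rw [locKer, Measure.smul_apply, Measure.finsetSum_apply, smul_eq_mul]
  congr 1
  refine Finset.sum_congr rfl fun s _ => ?_
  rw [Measure.smul_apply, Measure.dirac_apply' _ hB, smul_eq_mul]
  by_cases hsx : s • x ∈ B
  · simp [hsx, hBY hsx]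
  · simp [hsx]

theorem mkBdry_eq_sum_setLIntegral (hmeas : ∀ γ : Γ, Measurable (fun x : X => γ • x))
    (hY : MeasurableSet Y) (hA : MeasurableSet A) (hAY : A ⊆ Y)
    (hσ : ∀ x ∈ A, sigmaLoc ν S Y x ≠ 0) (hσ' : ∀ x ∈ A, sigmaLoc ν S Y x ≠ ⊤) :
    mkBdry ν S Y A =
      ∑ s ∈ S, ∫⁻ x in A ∩ (fun x => s • x) ⁻¹' (Y \ A), rnd ν s x ^ (1 / 2 : ℝ) ∂ν := by
  have hYA : MeasurableSet (Y \ A) := hY.diff hA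
  have hterm : ∀ s ∈ S, Measurable (((fun x => s • x) ⁻¹' (Y \ A)).indicator
      (fun x => rnd ν s x ^ (1 / 2 : ℝ))) :=
    fun s _ => ((Measure.measurable_rnDeriv _ _).pow_const _).indicator (hmeas s hYA)
  have hσm := measurable_sigmaLoc (ν := ν) (S := S) hmeas hY
  have hkernel : Measurable fun x => (sigmaLoc ν S Y x)⁻¹ * ∑ s ∈ S,
      ((fun x => s • x) ⁻¹' (Y \ A)).indicator (fun x => rnd ν s x ^ (1 / 2 : ℝ)) x :=
    hσm.inv.mul (Finset.measurable_sum _ hterm)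
  calc mkBdry ν S Y A
      = ∫⁻ x in A, sigmaLoc ν S Y x * ((sigmaLoc ν S Y x)⁻¹ * ∑ s ∈ S,
          ((fun x => s • x) ⁻¹' (Y \ A)).indicator (fun x => rnd ν s x ^ (1 / 2 : ℝ)) x) ∂ν := by
        simp_rw [mkBdry, locKer_apply_of_subset hYA Set.sdiff_subset]
        rw [nuT, restrict_withDensity hA, Measure.restrict_restrict hA,
          Set.inter_eq_self_of_subset_left hAY,
          lintegral_withDensity_eq_lintegral_mul _ hσm hkernel]
        rfl
    _ = ∑ s ∈ S, ∫⁻ x in A,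
          ((fun x => s • x) ⁻¹' (Y \ A)).indicator (fun x => rnd ν s x ^ (1 / 2 : ℝ)) x ∂ν := by
        rw [← lintegral_finsetSum _ hterm]
        refine setLIntegral_congr_fun hA fun x hx => ?_
        rw [← mul_assoc, ENNReal.mul_inv_cancel (hσ x hx) (hσ' x hx), one_mul]
    _ = _ := by
        simp_rw [setLIntegral_indicator (hmeas _ hYA), Set.inter_comm]

theorem RNBoundedOn.sigmaLoc_ne_zero (h : RNBoundedOn ν S Y θ) (hθ : 1 ≤ θ) (hθ' : θ ≠ ⊤)
    (hone : (1 : Γ) ∈ S) {x : X} (hx : x ∈ Y) : sigmaLoc ν S Y x ≠ 0 :=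
  ((ENNReal.inv_pos.2 hθ').trans_le (h.inv_le_sigmaLoc hθ hone hx)).ne'

theorem RNBoundedOn.sigmaLoc_ne_top (h : RNBoundedOn ν S Y θ) (hθ : 1 ≤ θ) (hθ' : θ ≠ ⊤)
    {x : X} (hx : x ∈ Y) : sigmaLoc ν S Y x ≠ ⊤ :=
  ne_top_of_le_ne_top (mul_ne_top (natCast_ne_top _) hθ') (h.sigmaLoc_le hθ hx)

theorem RNBoundedOn.mkBdry_le_mul_edgeMeasure (h : RNBoundedOn ν S Y θ) (hθ : 1 ≤ θ)
    (hθ' : θ ≠ ⊤) (hone : (1 : Γ) ∈ S) (hmeas : ∀ γ : Γ, Measurable (fun x : X => γ • x))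
    (hY : MeasurableSet Y) (hA : MeasurableSet A) (hAY : A ⊆ Y) :
    mkBdry ν S Y A ≤ θ * edgeMeasure ν S Y A := by
  rw [mkBdry_eq_sum_setLIntegral hmeas hY hA hAY
    (fun x hx => h.sigmaLoc_ne_zero hθ hθ' hone (hAY hx))
    (fun x hx => h.sigmaLoc_ne_top hθ hθ' (hAY hx)), edgeMeasure, Finset.mul_sum]
  refine Finset.sum_le_sum fun s hs => ?_
  rw [← setLIntegral_const]
  exact setLIntegral_mono' (hA.inter (hmeas s (hY.diff hA))) fun x hx =>
    (ENNReal.rpow_half_mem_Icc_inv hθ (h x (hAY hx.1) s hs hx.2.1)).2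

theorem RNBoundedOn.edgeMeasure_le_mul_mkBdry (h : RNBoundedOn ν S Y θ) (hθ : 1 ≤ θ)
    (hθ' : θ ≠ ⊤) (hone : (1 : Γ) ∈ S) (hmeas : ∀ γ : Γ, Measurable (fun x : X => γ • x))
    (hY : MeasurableSet Y) (hA : MeasurableSet A) (hAY : A ⊆ Y) :
    edgeMeasure ν S Y A ≤ θ * mkBdry ν S Y A := by
  rw [mkBdry_eq_sum_setLIntegral hmeas hY hA hAY
    (fun x hx => h.sigmaLoc_ne_zero hθ hθ' hone (hAY hx))
    (fun x hx => h.sigmaLoc_ne_top hθ hθ' (hAY hx)), edgeMeasure, Finset.mul_sum]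
  refine Finset.sum_le_sum fun s hs => ?_
  rw [← ENNReal.inv_mul_le_iff (zero_lt_one.trans_le hθ).ne' hθ', ← setLIntegral_const]
  exact setLIntegral_mono' (hA.inter (hmeas s (hY.diff hA))) fun x hx =>
    (ENNReal.rpow_half_mem_Icc_inv hθ (h x (hAY hx.1) s hs hx.2.1)).1

theorem RNBoundedOn.measure_outerBoundary_le_mul_edgeMeasure (h : RNBoundedOn ν S Y θ)
    [SigmaFinite ν] (hmeas : ∀ γ : Γ, Measurable (fun x : X => γ • x))
    (hmcp : ∀ γ : Γ, Measure.QuasiMeasurePreserving (fun x : X => γ • x) ν ν)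
    (hY : MeasurableSet Y) (hA : MeasurableSet A) (hAY : A ⊆ Y) :
    ν (outerBoundary S Y A) ≤ θ * edgeMeasure ν S Y A := by
  calc ν (outerBoundary S Y A)
      = ν (⋃ s ∈ S, (fun x => s • x) '' (A ∩ (fun x => s • x) ⁻¹' (Y \ A))) := by
        simp_rw [outerBoundary, Set.iUnion₂_inter, Set.image_inter_preimage]
    _ ≤ ∑ s ∈ S, ν ((fun x => s • x) '' (A ∩ (fun x => s • x) ⁻¹' (Y \ A))) :=
        measure_biUnion_finset_le _ _
    _ ≤ ∑ s ∈ S, θ * ν (A ∩ (fun x => s • x) ⁻¹' (Y \ A)) :=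
        Finset.sum_le_sum fun s hs => h.measure_image_smul_le hmeas hmcp hs
          (hA.inter (hmeas s (hY.diff hA))) (Set.inter_subset_left.trans hAY) fun x hx => hx.2.1
    _ = θ * edgeMeasure ν S Y A := (Finset.mul_sum _ _ _).symm

/-- Each edge set `A ∩ s⁻¹(Y \ A)` is the image under `s⁻¹ ∈ S` of a piece of the outer
boundary, so it is controlled by the upper bound on `r(s⁻¹, ·)`. -/
theorem RNBoundedOn.edgeMeasure_le_mul_measure_outerBoundary (h : RNBoundedOn ν S Y θ)
    [SigmaFinite ν] (hmeas : ∀ γ : Γ, Measurable (fun x : X => γ • x))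
    (hmcp : ∀ γ : Γ, Measure.QuasiMeasurePreserving (fun x : X => γ • x) ν ν)
    (hsymm : ∀ s ∈ S, s⁻¹ ∈ S) (hY : MeasurableSet Y) (hA : MeasurableSet A) (hAY : A ⊆ Y) :
    edgeMeasure ν S Y A ≤ S.card * θ * ν (outerBoundary S Y A) := by
  rw [mul_assoc, ← nsmul_eq_mul]
  refine Finset.sum_le_card_nsmul _ _ _ fun s hs => ?_
  set C := A ∩ (fun x => s • x) ⁻¹' (Y \ A)
  have hC : MeasurableSet C := hA.inter (hmeas s (hY.diff hA))
  calc ν C = ν ((fun x => s⁻¹ • x) '' ((fun x => s • x) '' C)) := by simp [Set.image_image]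
    _ ≤ θ * ν ((fun x => s • x) '' C) := by
        refine h.measure_image_smul_le hmeas hmcp (hsymm s hs) ?_ ?_ ?_
        · rw [Set.image_smul, ← Set.preimage_smul_inv]; exact hmeas s⁻¹ hC
        · rintro _ ⟨y, hy, rfl⟩; exact hy.2.1
        · rintro _ ⟨y, hy, rfl⟩; simpa using hAY hy.1
    _ ≤ θ * ν (outerBoundary S Y A) := by
        gcongr
        rw [Set.image_inter_preimage]
        exact Set.inter_subset_inter_left _ fun y hy => Set.mem_iUnion₂.2 ⟨s, hs, hy⟩

theorem measure_outerBoundary_sdiff_le_edgeMeasure (hsymm : ∀ s ∈ S, s⁻¹ ∈ S) (hAY : A ⊆ Y) :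
    ν (outerBoundary S Y (Y \ A)) ≤ edgeMeasure ν S Y A := by
  refine (measure_mono fun x hx => ?_).trans (measure_biUnion_finset_le S _)
  rw [outerBoundary, Set.sdiff_sdiff_cancel_left hAY] at hx
  obtain ⟨t, ht, y, hy, rfl⟩ := Set.mem_iUnion₂.1 hx.1
  exact Set.mem_iUnion₂.2 ⟨t⁻¹, hsymm t ht, hx.2, by simpa using hy⟩

theorem edgeMeasure_sdiff_le_mul_measure_outerBoundary (hsymm : ∀ s ∈ S, s⁻¹ ∈ S)
    (hAY : A ⊆ Y) : edgeMeasure ν S Y (Y \ A) ≤ S.card * ν (outerBoundary S Y A) := by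
  rw [← nsmul_eq_mul, edgeMeasure, Set.sdiff_sdiff_cancel_left hAY]
  refine Finset.sum_le_card_nsmul _ _ _ fun s hs => measure_mono fun x hx => ⟨?_, hx.1⟩
  exact Set.mem_iUnion₂.2 ⟨s⁻¹, hsymm s hs, s • x, hx.2, inv_smul_smul s x⟩

theorem hasIsoperimetricConstant_outerBoundary_iff_mkBdry (h : RNBoundedOn ν S Y θ)
    (hθ : 1 ≤ θ) (hθ' : θ ≠ ⊤) (hsymm : ∀ s ∈ S, s⁻¹ ∈ S) (hone : (1 : Γ) ∈ S) [SigmaFinite ν]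
    (hmeas : ∀ γ : Γ, Measurable (fun x : X => γ • x))
    (hmcp : ∀ γ : Γ, Measure.QuasiMeasurePreserving (fun x : X => γ • x) ν ν)
    (hY : MeasurableSet Y) (hYfin : ν Y ≠ ⊤) :
    HasIsoperimetricConstant ν (fun A => ν (outerBoundary S Y A)) Y ↔
      HasIsoperimetricConstant (nuT ν S Y) (mkBdry ν S Y) Y := by
  have hcard : (S.card : ℝ≥0∞) ≠ ⊤ := natCast_ne_top _
  have hνT : nuT ν S Y Y ≠ ⊤ := ne_top_of_le_ne_top (mul_ne_top (mul_ne_top hcard hθ') hYfin)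
    (h.nuT_le_mul_measure hθ hY subset_rfl)
  have hE_le {A} (hA : MeasurableSet A) (hAY : A ⊆ Y) :=
    h.edgeMeasure_le_mul_mkBdry hθ hθ' hone hmeas hY hA hAY
  have hmk_le {A} (hA : MeasurableSet A) (hAY : A ⊆ Y) :=
    h.mkBdry_le_mul_edgeMeasure hθ hθ' hone hmeas hY hA hAY
  constructor
  · refine fun hiso => hiso.of_comparable hY hYfin hνT (mul_ne_top hcard hθ')
      (mul_ne_top hθ' hθ') hθ' (fun A hA hAY => h.nuT_le_mul_measure hθ hA hAY)
      (fun A hA hAY => ?_) (fun A hA hAY => ?_)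
    · calc ν (outerBoundary S Y A) ≤ θ * edgeMeasure ν S Y A :=
            h.measure_outerBoundary_le_mul_edgeMeasure hmeas hmcp hY hA hAY
        _ ≤ θ * θ * mkBdry ν S Y A := by rw [mul_assoc]; gcongr; exact hE_le hA hAY
    · exact (measure_outerBoundary_sdiff_le_edgeMeasure hsymm hAY).trans (hE_le hA hAY)
  · refine fun hiso => hiso.of_comparable hY hνT hYfin hθ' (mul_ne_top (mul_ne_top hθ' hcard) hθ')
      (mul_ne_top hθ' hcard) (fun A hA hAY => h.measure_le_mul_nuT hθ hθ' hone hA hAY)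
      (fun A hA hAY => ?_) (fun A hA hAY => ?_)
    · calc mkBdry ν S Y A ≤ θ * edgeMeasure ν S Y A := hmk_le hA hAY
        _ ≤ θ * (S.card * θ * ν (outerBoundary S Y A)) := by
            gcongr; exact h.edgeMeasure_le_mul_measure_outerBoundary hmeas hmcp hsymm hY hA hAY
        _ = θ * S.card * θ * ν (outerBoundary S Y A) := by ring
    · calc mkBdry ν S Y (Y \ A) ≤ θ * edgeMeasure ν S Y (Y \ A) :=
            hmk_le (hY.diff hA) Set.sdiff_subset
        _ ≤ θ * (S.card * ν (outerBoundary S Y A)) := by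
            gcongr; exact edgeMeasure_sdiff_le_mul_measure_outerBoundary hsymm hAY
        _ = θ * S.card * ν (outerBoundary S Y A) := by ring

end Action

theorem domainSExpansion_iff_markovSExpansion_general {Γ X : Type*} [Group Γ]
    [MulAction Γ X] [MeasurableSpace X] (ν : Measure X) [SigmaFinite ν]
    (hmeas : ∀ γ : Γ, Measurable (fun x : X => γ • x))
    (hmcp : ∀ γ : Γ, Measure.QuasiMeasurePreserving (fun x : X => γ • x) ν ν)
    (S : Finset Γ) (hsymm : ∀ s ∈ S, s⁻¹ ∈ S) (hone : (1 : Γ) ∈ S)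
    (Y : Set X) (hY : MeasurableSet Y) (hYfin : ν Y < ⊤)
    (Θ : ℝ) (hΘ : 1 ≤ Θ)
    (hbound : ∀ x ∈ Y, ∀ s ∈ S, s • x ∈ Y →
      ENNReal.ofReal (1 / Θ) ≤ rnd ν s x ∧ rnd ν s x ≤ ENNReal.ofReal Θ) :
    DomainSExpansion ν S Y ↔ MarkovSExpansion ν S Y := by
  have hθ : 1 ≤ ENNReal.ofReal Θ := ENNReal.one_le_ofReal.2 hΘ
  have hRN : RNBoundedOn ν S Y (ENNReal.ofReal Θ) := by
    intro x hx s hs hsx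
    rw [← ENNReal.ofReal_inv_of_pos (zero_lt_one.trans_le hΘ), ← one_div]
    exact hbound x hx s hs hsx
  have hνT : nuT ν S Y Y ≠ ⊤ := ne_top_of_le_ne_top
    (mul_ne_top (mul_ne_top (natCast_ne_top _) ofReal_ne_top) hYfin.ne)
    (hRN.nuT_le_mul_measure hθ hY subset_rfl)
  rw [domainSExpansion_iff_hasIsoperimetricConstant hone hYfin.ne, MarkovSExpansion,
    ← hasIsoperimetricConstant_iff_sInf_pos hνT]
  exact hasIsoperimetricConstant_outerBoundary_iff_mkBdry hRN hθ ofReal_ne_top hsymm hone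
    hmeas hmcp hY hYfin.ne

/-- **Lemma 3.19.** Suppose the Radon–Nikodym derivatives `r(s,·)` are
bounded between `1/Θ` and `Θ` on the relevant part of the domain `Y`. Then `Y` is a
domain of `S`-expansion if and only if `Y` is a domain of Markov `S`-expansion. -/
theorem domainSExpansion_iff_markovSExpansion {Γ X : Type*} [Group Γ] [Countable Γ]
    [MulAction Γ X] [MeasurableSpace X] (ν : Measure X) [SigmaFinite ν]
    (hmeas : ∀ γ : Γ, Measurable (fun x : X => γ • x))
    (hmcp : ∀ γ : Γ, Measure.QuasiMeasurePreserving (fun x : X => γ • x) ν ν)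
    (S : Finset Γ) (hsymm : ∀ s ∈ S, s⁻¹ ∈ S) (hone : (1 : Γ) ∈ S)
    (Y : Set X) (hY : MeasurableSet Y) (hYpos : 0 < ν Y) (hYfin : ν Y < ⊤)
    (Θ : ℝ) (hΘ : 1 ≤ Θ)
    (hbound : ∀ x ∈ Y, ∀ s ∈ S, s • x ∈ Y →
      ENNReal.ofReal (1 / Θ) ≤ rnd ν s x ∧ rnd ν s x ≤ ENNReal.ofReal Θ) :
    DomainSExpansion ν S Y ↔ MarkovSExpansion ν S Y :=
  domainSExpansion_iff_markovSExpansion_general ν hmeas hmcp S hsymm hone Y hY hYfin Θ hΘ hbound
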